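/- Let u ∈ ℝⁿ with r := ‖u‖ > 0, let b ∈ ℝⁿ with ‖b‖ ≤ f₀, let F₁ ∈ ℝ^{n×n} satisfy ⟨x, F₁x⟩ ≤ λ‖x‖² for all x ∈ ℝⁿ, and let F₂ ∈ ℝ^{n×n²}. Assume f₀ + λr + ‖F₂‖r² < 0, set F = b + F₁u + F₂(u⊗u), and let h > 0 satisfy h‖F‖² ≤ −(f₀ + λr + ‖F₂‖r²)·r. Then ‖u + hF‖ ≤ ‖u‖. -/

import Mathlib

/-!
Expanding the square, `‖u + hF‖² = ‖u‖² + 2h⟪u, F⟫ + h²‖F‖²`. The hypotheses on `b`, `F₁`, `F₂`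
bound `⟪u, F⟫` by `c := (f₀ + λr + ‖F₂‖r²) r`, using `‖F₂(u ⊗ u)‖ ≤ ‖F₂‖ ‖u‖²`; the step-size
condition `h‖F‖² ≤ -c` forces `c ≤ 0`, so `2h⟪u, F⟫ + h²‖F‖² ≤ h(2c - c) = hc ≤ 0`.
-/

/-- The spectral (l₂ operator) norm of a real matrix. -/
noncomputable def specNorm {ι κ : Type*} [Fintype ι] [Fintype κ] [DecidableEq κ]
    (M : Matrix ι κ ℝ) : ℝ :=
  ‖LinearMap.toContinuousLinearMap (Matrix.toEuclideanLin M)‖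

/-- Application of a matrix to a Euclidean vector. -/
noncomputable def mApp {ι κ : Type*} [Fintype ι] [Fintype κ] [DecidableEq κ]
    (M : Matrix ι κ ℝ) (v : EuclideanSpace ℝ κ) : EuclideanSpace ℝ ι :=
  Matrix.toEuclideanLin M v

/-- The Kronecker product of two Euclidean vectors: `(x ⊗ y)_{(i,k)} = x_i y_k`. -/
noncomputable def kron {ι κ : Type*} [Fintype ι] [Fintype κ]
    (x : EuclideanSpace ℝ ι) (y : EuclideanSpace ℝ κ) : EuclideanSpace ℝ (ι × κ) :=
  (WithLp.equiv 2 _).symm fun p => x p.1 * y p.2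

open RealInnerProductSpace

theorem norm_mApp_le {ι κ : Type*} [Fintype ι] [Fintype κ] [DecidableEq κ]
    (M : Matrix ι κ ℝ) (v : EuclideanSpace ℝ κ) : ‖mApp M v‖ ≤ specNorm M * ‖v‖ :=
  (LinearMap.toContinuousLinearMap (Matrix.toEuclideanLin M)).le_opNorm v

theorem norm_kron {ι κ : Type*} [Fintype ι] [Fintype κ]
    (x : EuclideanSpace ℝ ι) (y : EuclideanSpace ℝ κ) : ‖kron x y‖ = ‖x‖ * ‖y‖ := by
  rw [EuclideanSpace.norm_eq, EuclideanSpace.norm_eq, EuclideanSpace.norm_eq,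
    ← Real.sqrt_mul (by positivity), Fintype.sum_prod_type, Finset.sum_mul_sum]
  simp [kron, mul_pow]

theorem norm_add_smul_le_norm_of_inner_le {E : Type*} [NormedAddCommGroup E]
    [InnerProductSpace ℝ E] {u F : E} {h c : ℝ} (hh : 0 ≤ h) (hinner : ⟪u, F⟫ ≤ c)
    (hstep : h * ‖F‖ ^ 2 ≤ -c) : ‖u + h • F‖ ≤ ‖u‖ := by
  have hc : c ≤ 0 := by nlinarith [mul_nonneg hh (sq_nonneg ‖F‖)]
  have hsq : ‖u + h • F‖ ^ 2 ≤ ‖u‖ ^ 2 := by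
    rw [norm_add_sq_real, real_inner_smul_right, norm_smul, Real.norm_eq_abs, mul_pow, sq_abs]
    nlinarith [mul_le_mul_of_nonneg_left hinner hh]
  exact (pow_le_pow_iff_left₀ (norm_nonneg _) (norm_nonneg _) two_ne_zero).mp hsq

theorem inner_quadratic_field_le {ι : Type*} [Fintype ι] [DecidableEq ι]
    {u b : EuclideanSpace ℝ ι} {f₀ lam : ℝ} {F1 : Matrix ι ι ℝ} (F2 : Matrix ι (ι × ι) ℝ)
    (hb : ‖b‖ ≤ f₀) (hquad : ⟪u, mApp F1 u⟫ ≤ lam * ‖u‖ ^ 2) :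
    ⟪u, b + mApp F1 u + mApp F2 (kron u u)⟫ ≤
      (f₀ + lam * ‖u‖ + specNorm F2 * ‖u‖ ^ 2) * ‖u‖ := by
  have hb' : ⟪u, b⟫ ≤ f₀ * ‖u‖ :=
    (real_inner_le_norm u b).trans (by nlinarith [norm_nonneg u])
  have hF2 : ⟪u, mApp F2 (kron u u)⟫ ≤ specNorm F2 * ‖u‖ ^ 2 * ‖u‖ :=
    calc ⟪u, mApp F2 (kron u u)⟫ ≤ ‖u‖ * ‖mApp F2 (kron u u)‖ := real_inner_le_norm _ _
      _ ≤ ‖u‖ * (specNorm F2 * ‖kron u u‖) := by gcongr; exact norm_mApp_le _ _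
      _ = specNorm F2 * ‖u‖ ^ 2 * ‖u‖ := by rw [norm_kron]; ring
  rw [inner_add_right, inner_add_right]
  linarith

theorem euler_step_norm_nonincreasing_general (n : ℕ) (u b : EuclideanSpace ℝ (Fin n))
    (f₀ lam : ℝ) (F1 : Matrix (Fin n) (Fin n) ℝ) (F2 : Matrix (Fin n) (Fin n × Fin n) ℝ)
    (hb : ‖b‖ ≤ f₀)
    (hquad : ∀ x : EuclideanSpace ℝ (Fin n), (inner ℝ x (mApp F1 x) : ℝ) ≤ lam * ‖x‖ ^ 2)
    (h : ℝ) (hh : 0 < h)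
    (hstep : h * ‖b + mApp F1 u + mApp F2 (kron u u)‖ ^ 2 ≤
      -(f₀ + lam * ‖u‖ + specNorm F2 * ‖u‖ ^ 2) * ‖u‖) :
    ‖u + h • (b + mApp F1 u + mApp F2 (kron u u))‖ ≤ ‖u‖ :=
  norm_add_smul_le_norm_of_inner_le hh.le (inner_quadratic_field_le F2 hb (hquad u))
    (by rwa [neg_mul] at hstep)

/-- Per-step stability estimate for the forward Euler scheme applied to the
quadratic ODE `u' = F₀(t) + F₁u + F₂(u⊗u)`: if `‖b‖ ≤ f₀`, `⟨x, F₁x⟩ ≤ λ‖x‖²`,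
`f₀ + λr + ‖F₂‖r² < 0` with `r = ‖u‖ > 0`, and the step  size `h > 0` satisfies
`h‖F‖² ≤ −(f₀ + λr + ‖F₂‖r²)·r` for `F = b + F₁u + F₂(u⊗u)`,
then `‖u + hF‖ ≤ ‖u‖`. -/
theorem euler_step_norm_nonincreasing (n : ℕ) (u b : EuclideanSpace ℝ (Fin n))
    (f₀ lam : ℝ) (F1 : Matrix (Fin n) (Fin n) ℝ) (F2 : Matrix (Fin n) (Fin n × Fin n) ℝ)
    (hr : 0 < ‖u‖) (hb : ‖b‖ ≤ f₀)
    (hquad : ∀ x : EuclideanSpace ℝ (Fin n), (inner ℝ x (mApp F1 x) : ℝ) ≤ lam * ‖x‖ ^ 2)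
    (hneg : f₀ + lam * ‖u‖ + specNorm F2 * ‖u‖ ^ 2 < 0)
    (h : ℝ) (hh : 0 < h)
    (hstep : h * ‖b + mApp F1 u + mApp F2 (kron u u)‖ ^ 2 ≤
      -(f₀ + lam * ‖u‖ + specNorm F2 * ‖u‖ ^ 2) * ‖u‖) :
    ‖u + h • (b + mApp F1 u + mApp F2 (kron u u))‖ ≤ ‖u‖ :=
  euler_step_norm_nonincreasing_general n u b f₀ lam F1 F2 hb hquad h hh hstep
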